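/- arXiv:2604.04808 — 7 statements merged into one kernel-verified Lean document; each statement's English description precedes it below -/
import Mathlib

section
/- Let (S, A, P, R, γ) be a finite MDP with discount factor γ ∈ [0,1). Let Z be any type, ε ≥ 0, and let φ : S → Z be an ε-approximate state abstraction, i.e. whenever φ(s₁) = φ(s₂) one has max_{a ∈ A} |Q*(s₁,a) − Q*(s₂,a)| ≤ ε. Let π : S → A be any deterministic policy that is constant on abstraction classes (φ(s₁) = φ(s₂) implies π(s₁) = π(s₂)) and such that for every s ∈ S there exists s₀ ∈ S with φ(s₀) = φ(s) and π(s) ∈ argmax_{a ∈ A} Q*(s₀, a). Then for every s ∈ S, V*(s) − V^π(s) ≤ 2ε/(1−γ)². -/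
/-- Suboptimality bound for a policy induced by an ε-approximate state abstraction
(Theorem 1 of Abel et al., approximate state abstraction). -/
theorem eps_approx_state_abstraction_value_loss
    {S A Z : Type*} [Fintype S] [Nonempty S] [Fintype A] [Nonempty A]
    (P : S → A → S → ℝ) (R : S → A → ℝ) (γ : ℝ)
    (hP0 : ∀ s a s', 0 ≤ P s a s') (hP1 : ∀ s a, ∑ s', P s a s' = 1)
    (hγ0 : 0 ≤ γ) (hγ1 : γ < 1)
    -- the optimal value function: unique solution of the optimal Bellman equation
    (Vstar : S → ℝ)
    (hVstar : ∀ s, Vstar s =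
      Finset.univ.sup' Finset.univ_nonempty
        (fun a : A => R s a + γ * ∑ s', P s a s' * Vstar s'))
    -- the optimal action-value function
    (Qstar : S → A → ℝ)
    (hQstar : ∀ s a, Qstar s a = R s a + γ * ∑ s', P s a s' * Vstar s')
    -- φ is an ε-approximate state abstraction
    (ε : ℝ) (hε : 0 ≤ ε) (φ : S → Z)
    (habs : ∀ s₁ s₂, φ s₁ = φ s₂ →
      Finset.univ.sup' Finset.univ_nonempty
        (fun a : A => |Qstar s₁ a - Qstar s₂ a|) ≤ ε)
    -- π is a deterministic policy constant on abstraction classes,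
    -- acting greedily w.r.t. Q* at some representative of each class
    (π : S → A)
    (hconst : ∀ s₁ s₂, φ s₁ = φ s₂ → π s₁ = π s₂)
    (hgreedy : ∀ s, ∃ s₀, φ s₀ = φ s ∧ ∀ a, Qstar s₀ a ≤ Qstar s₀ (π s))
    -- the value function of π: unique solution of the Bellman equation for π
    (Vπ : S → ℝ)
    (hVπ : ∀ s, Vπ s = R s (π s) + γ * ∑ s', P s (π s) s' * Vπ s') :
    ∀ s, Vstar s - Vπ s ≤ 2 * ε / (1 - γ) ^ 2 := by
  have hγpos : 0 < 1 - γ := by linarith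
  -- Qstar difference bound across abstraction classes
  have hQdiff : ∀ s₁ s₂ a, φ s₁ = φ s₂ → Qstar s₁ a - Qstar s₂ a ≤ ε := by
    intro s₁ s₂ a h
    calc Qstar s₁ a - Qstar s₂ a ≤ |Qstar s₁ a - Qstar s₂ a| := le_abs_self _
    _ ≤ Finset.univ.sup' Finset.univ_nonempty
        (fun a : A => |Qstar s₁ a - Qstar s₂ a|) :=
        Finset.le_sup' (fun a : A => |Qstar s₁ a - Qstar s₂ a|) (Finset.mem_univ a)
    _ ≤ ε := habs s₁ s₂ h
  -- Vstar s = sup over actions of Qstar s a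
  have hVQ : ∀ s, Vstar s = Finset.univ.sup' Finset.univ_nonempty (fun a => Qstar s a) := by
    intro s
    rw [hVstar s]
    congr 1
    funext a
    rw [hQstar]
  -- key: Vstar s ≤ Qstar s (π s) + 2ε
  have hkey : ∀ s, Vstar s ≤ Qstar s (π s) + 2 * ε := by
    intro s
    obtain ⟨s₀, hφ, hmax⟩ := hgreedy s
    obtain ⟨a, -, ha⟩ := Finset.exists_mem_eq_sup' (Finset.univ_nonempty (α := A))
      (fun a => Qstar s a)
    have h1 : Qstar s a - Qstar s₀ a ≤ ε := hQdiff s s₀ a hφ.symm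
    have h2 : Qstar s₀ a ≤ Qstar s₀ (π s) := hmax a
    have h3 : Qstar s₀ (π s) - Qstar s (π s) ≤ ε := hQdiff s₀ s (π s) hφ
    rw [hVQ s, ha]
    linarith
  -- M := sup of Vstar - Vπ
  set M : ℝ := Finset.univ.sup' Finset.univ_nonempty (fun s : S => Vstar s - Vπ s) with hM
  obtain ⟨t, -, ht⟩ := Finset.exists_mem_eq_sup' (Finset.univ_nonempty (α := S))
    (fun s : S => Vstar s - Vπ s)
  have hMle : ∀ s, Vstar s - Vπ s ≤ M := fun s =>
    Finset.le_sup' (fun s : S => Vstar s - Vπ s) (Finset.mem_univ s)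
  -- M ≤ 2ε + γ M
  have hMbound : M ≤ 2 * ε + γ * M := by
    have hsum : ∑ s', P t (π t) s' * Vstar s' - ∑ s', P t (π t) s' * Vπ s' ≤ M := by
      rw [← Finset.sum_sub_distrib]
      calc ∑ s', (P t (π t) s' * Vstar s' - P t (π t) s' * Vπ s')
          = ∑ s', P t (π t) s' * (Vstar s' - Vπ s') := by
            apply Finset.sum_congr rfl; intro s' _; ring
        _ ≤ ∑ s', P t (π t) s' * M := by
            apply Finset.sum_le_sum
            intro s' _
            exact mul_le_mul_of_nonneg_left (hMle s') (hP0 t (π t) s')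
        _ = M := by rw [← Finset.sum_mul, hP1, one_mul]
    have hQV : Qstar t (π t) - Vπ t = γ * (∑ s', P t (π t) s' * Vstar s' - ∑ s', P t (π t) s' * Vπ s') := by
      rw [hQstar, hVπ t]; ring
    have h1 : Qstar t (π t) - Vπ t ≤ γ * M := by
      rw [hQV]
      exact mul_le_mul_of_nonneg_left hsum hγ0
    have h2 := hkey t
    have hMt : M = Vstar t - Vπ t := hM.trans ht
    linarith
  have hMfin : M ≤ 2 * ε / (1 - γ) := by
    rw [le_div_iff₀ hγpos]
    nlinarith
  intro s
  calc Vstar s - Vπ s ≤ M := hMle s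
    _ ≤ 2 * ε / (1 - γ) := hMfin
    _ ≤ 2 * ε / (1 - γ) ^ 2 := by
        apply div_le_div_of_nonneg_left (by linarith) (by positivity)
        nlinarith
end

section
/- Let (S, A, P, R, γ) be a finite MDP with discount factor γ ∈ [0,1). Let c : Fin K → S → Bool be a concept bank and let 𝐜 ⊆ Fin K be a subset of concepts, inducing the concept predictor g_𝐜 : S → (𝐜 → Bool), g_𝐜(s) = (j ↦ c j s). Define the abstraction error ε(g_𝐜) = max over pairs (s,s') ∈ S × S with g_𝐜(s) = g_𝐜(s') of max_{a ∈ A} |Q*(s,a) − Q*(s',a)|. Let π_𝐜 : S → A be any deterministic policy that is constant on the classes of g_𝐜 and such that for every s ∈ S there exists s₀ with g_𝐜(s₀) = g_𝐜(s) and π_𝐜(s) ∈ argmax_{a ∈ A} Q*(s₀,a). Then for every s ∈ S, V*(s) − V^{π_𝐜}(s) ≤ 2 ε(g_𝐜)/(1−γ)². -/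
/-- The Q-distance between two states: `max_{a} |Q(s,a) - Q(s',a)|`. -/
noncomputable def Qdist {S A : Type*} [Fintype A] [Nonempty A]
    (Q : S → A → ℝ) (s s' : S) : ℝ :=
  Finset.univ.sup' Finset.univ_nonempty (fun a : A => |Q s a - Q s' a|)

/-- The concept predictor induced by a subset `cs` of a concept bank `c`. -/
def conceptPredictor {S : Type*} {K : ℕ} (c : Fin K → S → Bool)
    (cs : Finset (Fin K)) (s : S) : {j // j ∈ cs} → Bool :=
  fun j => c j.1 s

/-- The abstraction error of the concept predictor induced by `cs`:
the maximum Q-distance over pairs of states with equal concept representation. -/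
noncomputable def abstractionError {S A : Type*} [Fintype S] [Nonempty S]
    [Fintype A] [Nonempty A] [DecidableEq S] {K : ℕ}
    (Q : S → A → ℝ) (c : Fin K → S → Bool) (cs : Finset (Fin K)) : ℝ :=
  (Finset.univ.filter
      (fun p : S × S => conceptPredictor c cs p.1 = conceptPredictor c cs p.2)).sup'
    (by
      obtain ⟨s⟩ := (inferInstance : Nonempty S)
      exact ⟨(s, s), by simp⟩)
    (fun p => Qdist Q p.1 p.2)

/-- Suboptimality bound for a policy built on the concepts `cs`, in terms of
the abstraction error `ε(g_cs)` of the induced concept predictor. -/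
theorem concept_abstraction_value_loss
    {S A : Type*} [Fintype S] [Nonempty S] [Fintype A] [Nonempty A] [DecidableEq S]
    (P : S → A → S → ℝ) (R : S → A → ℝ) (γ : ℝ)
    (hP0 : ∀ s a s', 0 ≤ P s a s') (hP1 : ∀ s a, ∑ s', P s a s' = 1)
    (hγ0 : 0 ≤ γ) (hγ1 : γ < 1)
    -- the optimal value function: unique solution of the optimal Bellman equation
    (Vstar : S → ℝ)
    (hVstar : ∀ s, Vstar s =
      Finset.univ.sup' Finset.univ_nonempty
        (fun a : A => R s a + γ * ∑ s', P s a s' * Vstar s'))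
    -- the optimal action-value function
    (Qstar : S → A → ℝ)
    (hQstar : ∀ s a, Qstar s a = R s a + γ * ∑ s', P s a s' * Vstar s')
    -- a concept bank and a subset of selected concepts
    (K : ℕ) (c : Fin K → S → Bool) (cs : Finset (Fin K))
    -- πcs is a deterministic policy constant on the classes of g_cs,
    -- acting greedily w.r.t. Q* at some representative of each class
    (πcs : S → A)
    (hconst : ∀ s₁ s₂, conceptPredictor c cs s₁ = conceptPredictor c cs s₂ →
      πcs s₁ = πcs s₂)
    (hgreedy : ∀ s, ∃ s₀, conceptPredictor c cs s₀ = conceptPredictor c cs s ∧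
      ∀ a, Qstar s₀ a ≤ Qstar s₀ (πcs s))
    -- the value function of πcs: unique solution of the Bellman equation for πcs
    (Vπ : S → ℝ)
    (hVπ : ∀ s, Vπ s = R s (πcs s) + γ * ∑ s', P s (πcs s) s' * Vπ s') :
    ∀ s, Vstar s - Vπ s ≤ 2 * abstractionError Qstar c cs / (1 - γ) ^ 2 := by
  set ε := abstractionError Qstar c cs with hεdef
  have hγpos : 0 < 1 - γ := by linarith
  -- pair bound
  have hmem : ∀ s s' : S, conceptPredictor c cs s = conceptPredictor c cs s' →
      ∀ a, |Qstar s a - Qstar s' a| ≤ ε := by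
    intro s s' h a
    have h1 : Qdist Qstar s s' ≤ ε := by
      rw [hεdef]
      unfold abstractionError
      have hmemf : (s, s') ∈ Finset.univ.filter
          (fun p : S × S => conceptPredictor c cs p.1 = conceptPredictor c cs p.2) :=
        Finset.mem_filter.mpr ⟨Finset.mem_univ _, h⟩
      exact Finset.le_sup' (fun p : S × S => Qdist Qstar p.1 p.2) hmemf
    refine le_trans ?_ h1
    unfold Qdist
    exact Finset.le_sup' (fun a : A => |Qstar s a - Qstar s' a|) (Finset.mem_univ a)
  have hε0 : 0 ≤ ε := by
    obtain ⟨s⟩ := (inferInstance : Nonempty S)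
    have := hmem s s rfl (Classical.arbitrary A)
    have h0 := abs_nonneg (Qstar s (Classical.arbitrary A) - Qstar s (Classical.arbitrary A))
    linarith
  have hVQ : ∀ s, Vstar s = Finset.univ.sup' Finset.univ_nonempty (fun a => Qstar s a) := by
    intro s
    rw [hVstar s]
    exact Finset.sup'_congr _ rfl (fun a _ => (hQstar s a).symm)
  have h1 : ∀ s, Vstar s ≤ Qstar s (πcs s) + 2 * ε := by
    intro s
    obtain ⟨s₀, heq, hgr⟩ := hgreedy s
    rw [hVQ s]
    apply Finset.sup'_le
    intro a _
    have ha := (abs_le.mp (hmem s s₀ heq.symm a)).2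
    have hb := (abs_le.mp (hmem s₀ s heq (πcs s))).2
    have hc := hgr a
    linarith
  set Δ := Finset.univ.sup' Finset.univ_nonempty (fun s : S => Vstar s - Vπ s) with hΔdef
  have hΔle : ∀ s, Vstar s - Vπ s ≤ Δ := fun s =>
    Finset.le_sup' (fun s : S => Vstar s - Vπ s) (Finset.mem_univ s)
  have key : ∀ s, Vstar s - Vπ s ≤ 2 * ε + γ * Δ := by
    intro s
    have hq := hQstar s (πcs s)
    have hv := hVπ s
    have hsum : ∑ s', P s (πcs s) s' * Vstar s' - ∑ s', P s (πcs s) s' * Vπ s'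
        = ∑ s', P s (πcs s) s' * (Vstar s' - Vπ s') := by
      rw [← Finset.sum_sub_distrib]
      exact Finset.sum_congr rfl (fun s' _ => by ring)
    have hsle : ∑ s', P s (πcs s) s' * (Vstar s' - Vπ s') ≤ Δ := by
      calc ∑ s', P s (πcs s) s' * (Vstar s' - Vπ s')
          ≤ ∑ s', P s (πcs s) s' * Δ :=
            Finset.sum_le_sum (fun s' _ =>
              mul_le_mul_of_nonneg_left (hΔle s') (hP0 _ _ _))
        _ = Δ := by rw [← Finset.sum_mul, hP1]; ring
    have hmul : γ * (∑ s', P s (πcs s) s' * (Vstar s' - Vπ s')) ≤ γ * Δ :=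
      mul_le_mul_of_nonneg_left hsle hγ0
    have := h1 s
    nlinarith [hsum]
  have hΔ2 : Δ ≤ 2 * ε + γ * Δ :=
    hΔdef ▸ Finset.sup'_le _ _ (fun s _ => key s)
  have hΔ3 : Δ ≤ 2 * ε / (1 - γ) := by
    rw [le_div_iff₀ hγpos]; nlinarith
  intro s
  have hlast : 2 * ε / (1 - γ) ≤ 2 * ε / (1 - γ) ^ 2 := by
    rw [div_le_div_iff₀ hγpos (by positivity)]
    nlinarith [mul_nonneg (mul_nonneg hε0 hγpos.le) hγ0]
  calc Vstar s - Vπ s ≤ Δ := hΔle s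
    _ ≤ 2 * ε / (1 - γ) := hΔ3
    _ ≤ 2 * ε / (1 - γ) ^ 2 := hlast
end

section
/- Let S be a finite nonempty set, A a finite nonempty set, Q : S → A → ℝ, and define D(s,s') = max_{a ∈ A} |Q(s,a) − Q(s',a)|. Let c : Fin K → S → Bool be a concept bank and k ≤ K a budget. Call a pair (x, Y) with x : Fin K → Bool and Y : S → S → Bool feasible if: (i) |{j : x j = true}| ≤ k; (ii) for all s, s', if Y s s' = true then there exists j with x j = true and c j s ≠ c j s'; (iii) for all pairs (s,s') and (t,t'), if D(s,s') ≤ D(t,t') then Y s s' ≤ Y t t' (with false ≤ true). For a subset of selected concepts 𝐜 = {j : x j = true}, write g_𝐜(s) for the tuple (c j s)_{j ∈ 𝐜} and ε(g_𝐜) = max over pairs (s,s') with g_𝐜(s) = g_𝐜(s') of D(s,s'). If (x*, Y*) minimizes the objective ∑_{(s,s') ∈ S×S} D(s,s') · (if Y s s' then 0 else 1) over all feasible pairs, then the selected concept set 𝐜* = {j : x*_j = true} satisfies ε(g_{𝐜*}) = min over all subsets 𝐜 ⊆ Fin K with |𝐜| ≤ k of ε(g_𝐜). -/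
/-- Feasibility for the DRS integer program (with ρ = 0): at most `k` selected
concepts, separation is witnessed by a selected concept, and separation is
monotone in the Q-distance. -/
def Feasible {S A : Type*} [Fintype A] [Nonempty A] {K : ℕ}
    (Q : S → A → ℝ) (c : Fin K → S → Bool) (k : ℕ)
    (x : Fin K → Bool) (Y : S → S → Bool) : Prop :=
  (Finset.univ.filter (fun j => x j = true)).card ≤ k ∧
  (∀ s s', Y s s' = true → ∃ j, x j = true ∧ c j s ≠ c j s') ∧
  (∀ s s' t t', Qdist Q s s' ≤ Qdist Q t t' → Y s s' ≤ Y t t')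

/-- The DRS objective: `∑_{(s,s')} D(s,s') · (1 - Y(s,s'))`. -/
noncomputable def objective {S A : Type*} [Fintype S] [Fintype A] [Nonempty A]
    (Q : S → A → ℝ) (Y : S → S → Bool) : ℝ :=
  ∑ p : S × S, Qdist Q p.1 p.2 * (if Y p.1 p.2 then 0 else 1)

lemma Qdist_nonneg {S A : Type*} [Fintype A] [Nonempty A]
    (Q : S → A → ℝ) (s s' : S) : 0 ≤ Qdist Q s s' := by
  obtain ⟨a⟩ := (inferInstance : Nonempty A)
  exact le_trans (abs_nonneg (Q s a - Q s' a))
    (Finset.le_sup' (fun a : A => |Q s a - Q s' a|) (Finset.mem_univ a))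

lemma Qdist_self {S A : Type*} [Fintype A] [Nonempty A]
    (Q : S → A → ℝ) (s : S) : Qdist Q s s = 0 := by
  refine le_antisymm (Finset.sup'_le _ _ ?_) (Qdist_nonneg Q s s)
  intro a _; simp

lemma abstractionError_nonneg {S A : Type*} [Fintype S] [Nonempty S]
    [Fintype A] [Nonempty A] [DecidableEq S] {K : ℕ}
    (Q : S → A → ℝ) (c : Fin K → S → Bool) (cs : Finset (Fin K)) :
    0 ≤ abstractionError Q c cs := by
  obtain ⟨s⟩ := (inferInstance : Nonempty S)
  have hm : ((s, s) : S × S) ∈ Finset.univ.filter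
      (fun p : S × S => conceptPredictor c cs p.1 = conceptPredictor c cs p.2) := by simp
  have h := Finset.le_sup' (fun p : S × S => Qdist Q p.1 p.2) hm
  rw [show Qdist Q (s, s).1 (s, s).2 = 0 from Qdist_self Q s] at h
  exact h

lemma le_abstractionError {S A : Type*} [Fintype S] [Nonempty S]
    [Fintype A] [Nonempty A] [DecidableEq S] {K : ℕ}
    (Q : S → A → ℝ) (c : Fin K → S → Bool) (cs : Finset (Fin K)) {s s' : S}
    (h : conceptPredictor c cs s = conceptPredictor c cs s') :
    Qdist Q s s' ≤ abstractionError Q c cs := by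
  have hm : ((s, s') : S × S) ∈ Finset.univ.filter
      (fun p : S × S => conceptPredictor c cs p.1 = conceptPredictor c cs p.2) := by
    simp [h]
  exact Finset.le_sup' (fun p : S × S => Qdist Q p.1 p.2) hm

/-- Any optimal solution of the DRS program (with ρ = 0) selects a concept set
whose abstraction error is minimal among all concept subsets of size at most `k`. -/
theorem drs_optimal_minimizes_abstraction_error
    {S A : Type*} [Fintype S] [Nonempty S] [Fintype A] [Nonempty A] [DecidableEq S]
    (Q : S → A → ℝ) (K k : ℕ) (hk : k ≤ K) (c : Fin K → S → Bool)
    (xstar : Fin K → Bool) (Ystar : S → S → Bool)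
    (hfeas : Feasible Q c k xstar Ystar)
    (hopt : ∀ x Y, Feasible Q c k x Y → objective Q Ystar ≤ objective Q Y) :
    IsLeast
      {e : ℝ | ∃ cs : Finset (Fin K), cs.card ≤ k ∧ e = abstractionError Q c cs}
      (abstractionError Q c (Finset.univ.filter (fun j => xstar j = true))) := by
  obtain ⟨hcard, hsep, hmono⟩ := hfeas
  set csstar : Finset (Fin K) := Finset.univ.filter (fun j => xstar j = true) with hcsstar
  constructor
  · exact ⟨csstar, hcard, rfl⟩
  · rintro e ⟨cs, hcsk, rfl⟩
    by_contra hcon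
    push_neg at hcon
    -- extract a pair with equal csstar-predictor but Qdist exceeding ε(cs)
    have : ¬ abstractionError Q c csstar ≤ abstractionError Q c cs := not_le.mpr hcon
    rw [abstractionError, Finset.sup'_le_iff] at this
    push_neg at this
    obtain ⟨p, hpmem, hpgt⟩ := this
    rw [Finset.mem_filter] at hpmem
    have hpeq : conceptPredictor c csstar p.1 = conceptPredictor c csstar p.2 := hpmem.2
    -- Ystar is false on p
    have hYp : Ystar p.1 p.2 = false := by
      cases hY : Ystar p.1 p.2 with
      | false => rfl
      | true =>
        obtain ⟨j, hxj, hne⟩ := hsep p.1 p.2 hY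
        have hj : j ∈ csstar := by simp [hcsstar, hxj]
        exact absurd (congrFun hpeq ⟨j, hj⟩) hne
    -- Ystar is false on all pairs with small Qdist
    have hYsmall : ∀ q : S × S, Qdist Q q.1 q.2 ≤ abstractionError Q c cs →
        Ystar q.1 q.2 = false := by
      intro q hq
      have := hmono q.1 q.2 p.1 p.2 (hq.trans hpgt.le)
      rw [hYp] at this
      exact le_antisymm this (Bool.false_le _)
    -- the competing solution built from cs
    set Y0 : S → S → Bool := fun t t' => decide (abstractionError Q c cs < Qdist Q t t')
      with hY0
    have hY0true : ∀ t t', Y0 t t' = true ↔ abstractionError Q c cs < Qdist Q t t' := by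
      intro t t'; simp [hY0]
    have hfeas0 : Feasible Q c k (fun j => decide (j ∈ cs)) Y0 := by
      refine ⟨?_, ?_, ?_⟩
      · have : Finset.univ.filter (fun j : Fin K => decide (j ∈ cs) = true) = cs := by
          ext j; simp
        rw [this]; exact hcsk
      · intro s s' hY
        rw [hY0true] at hY
        by_cases heq : conceptPredictor c cs s = conceptPredictor c cs s'
        · exact absurd (le_abstractionError Q c cs heq) (not_le.mpr hY)
        · have : ¬ ∀ j : {j // j ∈ cs}, c j.1 s = c j.1 s' :=
            fun hall => heq (funext hall)
          push_neg at this
          obtain ⟨j, hj⟩ := this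
          exact ⟨j.1, by simp [j.2], hj⟩
      · intro s s' t t' hd
        rw [Bool.le_iff_imp]
        intro h
        rw [hY0true] at h ⊢
        exact lt_of_lt_of_le h hd
    -- objective comparison: Y0 is strictly better, contradiction
    have hlt : objective Q Y0 < objective Q Ystar := by
      unfold objective
      apply Finset.sum_lt_sum
      · intro q _
        by_cases hq : Qdist Q q.1 q.2 ≤ abstractionError Q c cs
        · have h1 : Y0 q.1 q.2 = false := by
            simp [hY0, not_lt.mpr hq]
          rw [h1, hYsmall q hq]
        · have h1 : Y0 q.1 q.2 = true := by
            rw [hY0true]; exact not_le.mp hq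
          rw [h1, if_pos rfl, mul_zero]
          exact mul_nonneg (Qdist_nonneg Q q.1 q.2) (by split <;> norm_num)
      · refine ⟨p, Finset.mem_univ p, ?_⟩
        have h1 : Y0 p.1 p.2 = true := (hY0true p.1 p.2).mpr hpgt
        rw [h1, hYp, if_pos rfl, if_neg Bool.false_ne_true, mul_zero, mul_one]
        exact lt_of_le_of_lt (abstractionError_nonneg Q c cs) hpgt
    exact absurd (hopt _ _ hfeas0) (not_le.mpr hlt)
end

section
/- Let S and A be finite nonempty sets and let Q, Q̂ : S → A → ℝ satisfy |Q̂(s,a) − Q(s,a)| ≤ δ for all s, a, where δ ≥ 0. Let c : Fin K → S → Bool be a concept bank and k ≤ K. For a subset 𝐜 ⊆ Fin K let g_𝐜(s) = (c j s)_{j ∈ 𝐜} and ε_Q(g_𝐜) = max over pairs (s,s') with g_𝐜(s) = g_𝐜(s') of max_{a ∈ A} |Q(s,a) − Q(s',a)| (similarly ε_{Q̂}). Suppose 𝐜* minimizes ε_Q(g_𝐜) over all subsets 𝐜 ⊆ Fin K with |𝐜| ≤ k, and 𝐜̂ minimizes ε_{Q̂}(g_𝐜) over the same family. Then ε_Q(g_{𝐜̂})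 ≤ ε_Q(g_{𝐜*}) + 4δ. -/
lemma Qdist_le {S A : Type*} [Fintype A] [Nonempty A]
    (Q Qhat : S → A → ℝ) (δ : ℝ)
    (hclose : ∀ s a, |Qhat s a - Q s a| ≤ δ) (s s' : S) :
    Qdist Q s s' ≤ Qdist Qhat s s' + 2 * δ := by
  apply Finset.sup'_le
  intro a _
  have h1 := abs_le.mp (hclose s a)
  have h2 := abs_le.mp (hclose s' a)
  have h3 := abs_le.mp (Finset.le_sup' (fun a : A => |Qhat s a - Qhat s' a|)
    (Finset.mem_univ a))
  refine abs_le.2 ⟨?_, ?_⟩ <;>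
  · simp only [Qdist] at *
    obtain ⟨h1a, h1b⟩ := h1
    obtain ⟨h2a, h2b⟩ := h2
    obtain ⟨h3a, h3b⟩ := h3
    linarith

lemma abstractionError_le {S A : Type*} [Fintype S] [Nonempty S]
    [Fintype A] [Nonempty A] [DecidableEq S] {K : ℕ}
    (Q Qhat : S → A → ℝ) (δ : ℝ)
    (hclose : ∀ s a, |Qhat s a - Q s a| ≤ δ)
    (c : Fin K → S → Bool) (cs : Finset (Fin K)) :
    abstractionError Q c cs ≤ abstractionError Qhat c cs + 2 * δ := by
  unfold abstractionError
  apply Finset.sup'_le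
  intro p hp
  calc Qdist Q p.1 p.2 ≤ Qdist Qhat p.1 p.2 + 2 * δ :=
        Qdist_le Q Qhat δ hclose p.1 p.2
    _ ≤ _ := by
        have := Finset.le_sup' (f := fun p : S × S => Qdist Qhat p.1 p.2) hp
        linarith

/-- Selecting concepts with respect to an estimate `Q̂` that is uniformly within
`δ` of `Q` incurs at most `4δ` additional abstraction error. -/
theorem drs_robust_to_q_error
    {S A : Type*} [Fintype S] [Nonempty S] [Fintype A] [Nonempty A] [DecidableEq S]
    (Q Qhat : S → A → ℝ) (δ : ℝ) (hδ : 0 ≤ δ)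
    (hclose : ∀ s a, |Qhat s a - Q s a| ≤ δ)
    (K k : ℕ) (hk : k ≤ K) (c : Fin K → S → Bool)
    (csStar csHat : Finset (Fin K))
    (hcsStar_card : csStar.card ≤ k)
    (hcsStar_opt : ∀ cs : Finset (Fin K), cs.card ≤ k →
      abstractionError Q c csStar ≤ abstractionError Q c cs)
    (hcsHat_card : csHat.card ≤ k)
    (hcsHat_opt : ∀ cs : Finset (Fin K), cs.card ≤ k →
      abstractionError Qhat c csHat ≤ abstractionError Qhat c cs) :
    abstractionError Q c csHat ≤ abstractionError Q c csStar + 4 * δ := by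
  have h1 := abstractionError_le Q Qhat δ hclose c csHat
  have h2 := abstractionError_le Qhat Q δ (fun s a => by rw [abs_sub_comm]; exact hclose s a) c csStar
  have h3 := hcsHat_opt csStar hcsStar_card
  linarith
end

section
/- Let (S, A, P, R, γ) be a finite MDP with discount factor γ ∈ [0,1), with optimal action-value function Q*. Let Q̂ : S → A → ℝ satisfy |Q̂(s,a) − Q*(s,a)| ≤ δ for all s, a, where δ ≥ 0. Let c : Fin K → S → Bool be a concept bank and k ≤ K; for a subset 𝐜 let g_𝐜(s) = (c j s)_{j ∈ 𝐜} and let ε_{Q*}(g_𝐜) (resp. ε_{Q̂}(g_𝐜)) be the maximum over pairs with g_𝐜(s) = g_𝐜(s') of max_a |Q*(s,a) − Q*(s',a)| (resp. of max_a |Q̂(s,a) − Q̂(s',a)|). Let 𝐜* minimize ε_{Q*} and 𝐜̂ minimize ε_{Q̂} over subsets of size at most k. Let π̂ : S → A be any deterministic policy constant on the classes of g_{𝐜̂} such that for every s there exists s₀ with g_{𝐜̂}(s₀) = g_{𝐜̂}(s) and π̂(s) ∈ argmax_{a} Q*(s₀,a). Then for every deterministic policy π and every s ∈ S, V^π(s)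 − V^{π̂}(s) ≤ 2(ε_{Q*}(g_{𝐜*}) + 4δ)/(1−γ)². -/
lemma contraction_bound {S : Type*} [Fintype S] [Nonempty S]
    (γ b : ℝ) (hγ1 : γ < 1) (f g : S → ℝ)
    (h : ∀ s, f s - g s ≤ b + γ *
      Finset.univ.sup' Finset.univ_nonempty (fun s' => f s' - g s')) :
    ∀ s, f s - g s ≤ b / (1 - γ) := by
  set M := Finset.univ.sup' Finset.univ_nonempty (fun s' => f s' - g s') with hM
  have hMle : M ≤ b + γ * M := Finset.sup'_le _ _ (fun s _ => h s)
  have hγpos : 0 < 1 - γ := by linarith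
  have hMb : M ≤ b / (1 - γ) := by
    rw [le_div_iff₀ hγpos]; nlinarith
  intro s
  exact le_trans (Finset.le_sup' (fun s' => f s' - g s') (Finset.mem_univ s)) hMb

/-- weighted average bound -/
lemma sum_weighted_le {S : Type*} [Fintype S] (w h : S → ℝ) (M : ℝ)
    (hw0 : ∀ s, 0 ≤ w s) (hw1 : ∑ s, w s = 1) (hh : ∀ s, h s ≤ M) :
    ∑ s, w s * h s ≤ M := by
  calc ∑ s, w s * h s ≤ ∑ s, w s * M :=
        Finset.sum_le_sum (fun s _ => mul_le_mul_of_nonneg_left (hh s) (hw0 s))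
    _ = M := by rw [← Finset.sum_mul, hw1, one_mul]

lemma Qdist_le_Qdist_add {S A : Type*} [Fintype A] [Nonempty A]
    (Q Q' : S → A → ℝ) (δ : ℝ) (hclose : ∀ s a, |Q s a - Q' s a| ≤ δ)
    (s s' : S) : Qdist Q s s' ≤ Qdist Q' s s' + 2 * δ := by
  apply Finset.sup'_le
  intro a _
  have h1 := hclose s a
  have h2 := hclose s' a
  have h3 : |Q' s a - Q' s' a| ≤ Qdist Q' s s' :=
    Finset.le_sup' (fun a => |Q' s a - Q' s' a|) (Finset.mem_univ a)
  rw [abs_le] at *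
  constructor <;> [skip; skip] <;> cases h1 <;> cases h2 <;> cases h3 <;> linarith

/-- Value-loss bound for the policy induced by concepts selected from a `δ`-accurate
estimate `Q̂` of `Q*` (Theorem: robustness of DRS, value-function bound). -/
theorem drs_robust_value_loss
    {S A : Type*} [Fintype S] [Nonempty S] [Fintype A] [Nonempty A] [DecidableEq S]
    (P : S → A → S → ℝ) (R : S → A → ℝ) (γ : ℝ)
    (hP0 : ∀ s a s', 0 ≤ P s a s') (hP1 : ∀ s a, ∑ s', P s a s' = 1)
    (hγ0 : 0 ≤ γ) (hγ1 : γ < 1)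
    -- the optimal value function: unique solution of the optimal Bellman equation
    (Vstar : S → ℝ)
    (hVstar : ∀ s, Vstar s =
      Finset.univ.sup' Finset.univ_nonempty
        (fun a : A => R s a + γ * ∑ s', P s a s' * Vstar s'))
    -- the optimal action-value function
    (Qstar : S → A → ℝ)
    (hQstar : ∀ s a, Qstar s a = R s a + γ * ∑ s', P s a s' * Vstar s')
    -- the value function of each deterministic policy: unique solution of the
    -- Bellman equation for that policy
    (V : (S → A) → S → ℝ)
    (hV : ∀ (π : S → A) (s : S),
      V π s = R s (π s) + γ * ∑ s', P s (π s) s' * V π s')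
    -- a δ-accurate estimate of Q*
    (Qhat : S → A → ℝ) (δ : ℝ) (hδ : 0 ≤ δ)
    (hclose : ∀ s a, |Qhat s a - Qstar s a| ≤ δ)
    -- concept bank, budget, and the two minimizing concept subsets
    (K k : ℕ) (hk : k ≤ K) (c : Fin K → S → Bool)
    (csStar csHat : Finset (Fin K))
    (hcsStar_card : csStar.card ≤ k)
    (hcsStar_opt : ∀ cs : Finset (Fin K), cs.card ≤ k →
      abstractionError Qstar c csStar ≤ abstractionError Qstar c cs)
    (hcsHat_card : csHat.card ≤ k)
    (hcsHat_opt : ∀ cs : Finset (Fin K), cs.card ≤ k →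
      abstractionError Qhat c csHat ≤ abstractionError Qhat c cs)
    -- π̂ is constant on the classes of g_{ĉ} and greedy w.r.t. Q* at a
    -- representative of each class
    (πhat : S → A)
    (hconst : ∀ s₁ s₂, conceptPredictor c csHat s₁ = conceptPredictor c csHat s₂ →
      πhat s₁ = πhat s₂)
    (hgreedy : ∀ s, ∃ s₀, conceptPredictor c csHat s₀ = conceptPredictor c csHat s ∧
      ∀ a, Qstar s₀ a ≤ Qstar s₀ (πhat s)) :
    ∀ (π : S → A) (s : S),
      V π s - V πhat s ≤
        2 * (abstractionError Qstar c csStar + 4 * δ) / (1 - γ) ^ 2 := by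
  have hγpos : 0 < 1 - γ := by linarith
  -- abstraction errors
  set εS := abstractionError Qstar c csStar with hεS
  set εH := abstractionError Qstar c csHat with hεH
  -- Qdist within a class ≤ abstraction error
  have hpair : ∀ (Q : S → A → ℝ) (cs : Finset (Fin K)) (s s' : S),
      conceptPredictor c cs s = conceptPredictor c cs s' →
      Qdist Q s s' ≤ abstractionError Q c cs := by
    intro Q cs s s' hss
    have hm : (s, s') ∈ Finset.univ.filter
        (fun p : S × S => conceptPredictor c cs p.1 = conceptPredictor c cs p.2) := by
      simp only [Finset.mem_filter, Finset.mem_univ, true_and]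
      exact hss
    exact Finset.le_sup' (fun p : S × S => Qdist Q p.1 p.2) hm
  -- abstraction error comparisons
  have hcompare : ∀ (Q Q' : S → A → ℝ) (cs : Finset (Fin K)),
      (∀ s a, |Q s a - Q' s a| ≤ δ) →
      abstractionError Q c cs ≤ abstractionError Q' c cs + 2 * δ := by
    intro Q Q' cs hc
    apply Finset.sup'_le
    intro p hp
    simp only [Finset.mem_filter] at hp
    exact le_trans (Qdist_le_Qdist_add Q Q' δ hc p.1 p.2)
      (by linarith [hpair Q' cs p.1 p.2 hp.2])
  have hclose' : ∀ s a, |Qstar s a - Qhat s a| ≤ δ := by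
    intro s a; rw [abs_sub_comm]; exact hclose s a
  have hεHbound : εH ≤ εS + 4 * δ := by
    have h1 : εH ≤ abstractionError Qhat c csHat + 2 * δ :=
      hcompare Qstar Qhat csHat hclose'
    have h2 : abstractionError Qhat c csHat ≤ abstractionError Qhat c csStar :=
      hcsHat_opt csStar hcsStar_card
    have h3 : abstractionError Qhat c csStar ≤ εS + 2 * δ :=
      hcompare Qhat Qstar csStar hclose
    linarith
  -- nonnegativity
  have habsnn : ∀ cs : Finset (Fin K), (0:ℝ) ≤ abstractionError Qstar c cs := by
    intro cs
    obtain ⟨s⟩ := (inferInstance : Nonempty S)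
    have h0 : Qdist Qstar s s ≤ abstractionError Qstar c cs := hpair Qstar cs s s rfl
    have hq : (0:ℝ) ≤ Qdist Qstar s s := by
      obtain ⟨a⟩ := (inferInstance : Nonempty A)
      calc (0:ℝ) = |Qstar s a - Qstar s a| := by simp
        _ ≤ Qdist Qstar s s :=
          Finset.le_sup' (fun a : A => |Qstar s a - Qstar s a|) (Finset.mem_univ a)
    linarith
  have hεS0 : 0 ≤ εS := habsnn csStar
  -- Vstar as sup of Qstar
  have hVQ : ∀ s, Vstar s = Finset.univ.sup' Finset.univ_nonempty (fun a => Qstar s a) := by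
    intro s
    rw [hVstar s]
    congr 1
    ext a
    rw [hQstar]
  -- Step 1: V π ≤ Vstar
  have hstep1 : ∀ (π : S → A) (s : S), V π s - Vstar s ≤ 0 / (1 - γ) := by
    intro π
    apply contraction_bound γ 0 hγ1
    intro s
    set M := Finset.univ.sup' Finset.univ_nonempty (fun s' => V π s' - Vstar s') with hM
    have hQle : Qstar s (π s) ≤ Vstar s := by
      rw [hVQ s]
      exact Finset.le_sup' (fun a => Qstar s a) (Finset.mem_univ (π s))
    have hsum : ∑ s', P s (π s) s' * (V π s' - Vstar s') ≤ M :=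
      sum_weighted_le _ _ M (hP0 s (π s)) (hP1 s (π s))
        (fun s' => Finset.le_sup' (fun s' => V π s' - Vstar s') (Finset.mem_univ s'))
    have hexp : V π s - Vstar s ≤ γ * ∑ s', P s (π s) s' * (V π s' - Vstar s') := by
      rw [hV π s]
      have := hQstar s (π s)
      have hsplit : ∑ s', P s (π s) s' * (V π s' - Vstar s')
          = ∑ s', P s (π s) s' * V π s' - ∑ s', P s (π s) s' * Vstar s' := by
        rw [← Finset.sum_sub_distrib]
        congr 1; ext s'; ring
      rw [hsplit]
      nlinarith [hQle, hQstar s (π s)]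
    have : γ * ∑ s', P s (π s) s' * (V π s' - Vstar s') ≤ γ * M :=
      mul_le_mul_of_nonneg_left hsum hγ0
    linarith
  -- Step 2: πhat is 2εH-greedy w.r.t. Qstar
  have hgreedy2 : ∀ s, Vstar s ≤ Qstar s (πhat s) + 2 * εH := by
    intro s
    rw [hVQ s]
    apply Finset.sup'_le
    intro a _
    obtain ⟨s₀, hs₀, hmax⟩ := hgreedy s
    have hd : Qdist Qstar s₀ s ≤ εH := hpair Qstar csHat s₀ s hs₀
    have h1 : |Qstar s₀ a - Qstar s a| ≤ Qdist Qstar s₀ s :=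
      Finset.le_sup' (fun a => |Qstar s₀ a - Qstar s a|) (Finset.mem_univ a)
    have h2 : |Qstar s₀ (πhat s) - Qstar s (πhat s)| ≤ Qdist Qstar s₀ s :=
      Finset.le_sup' (fun a => |Qstar s₀ a - Qstar s a|) (Finset.mem_univ (πhat s))
    have h3 := hmax a
    rw [abs_le] at h1 h2
    cases h1; cases h2; linarith
  -- Step 3: Vstar - V πhat ≤ 2εH/(1-γ)
  have hstep3 : ∀ s, Vstar s - V πhat s ≤ 2 * εH / (1 - γ) := by
    apply contraction_bound γ (2 * εH) hγ1
    intro s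
    set M := Finset.univ.sup' Finset.univ_nonempty (fun s' => Vstar s' - V πhat s') with hM
    have hsum : ∑ s', P s (πhat s) s' * (Vstar s' - V πhat s') ≤ M :=
      sum_weighted_le _ _ M (hP0 s (πhat s)) (hP1 s (πhat s))
        (fun s' => Finset.le_sup' (fun s' => Vstar s' - V πhat s') (Finset.mem_univ s'))
    have hsplit : ∑ s', P s (πhat s) s' * (Vstar s' - V πhat s')
        = ∑ s', P s (πhat s) s' * Vstar s' - ∑ s', P s (πhat s) s' * V πhat s' := by
      rw [← Finset.sum_sub_distrib]
      congr 1; ext s'; ring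
    have hexp : Vstar s - V πhat s ≤ 2 * εH +
        γ * ∑ s', P s (πhat s) s' * (Vstar s' - V πhat s') := by
      rw [hsplit, hV πhat s]
      nlinarith [hgreedy2 s, hQstar s (πhat s)]
    have : γ * ∑ s', P s (πhat s) s' * (Vstar s' - V πhat s') ≤ γ * M :=
      mul_le_mul_of_nonneg_left hsum hγ0
    linarith
  -- conclude
  intro π s
  have h1 : V π s ≤ Vstar s := by have := hstep1 π s; simp at this; linarith
  have h2 := hstep3 s
  have hεHnn : 0 ≤ εH := habsnn csHat
  have hbound : V π s - V πhat s ≤ 2 * (εS + 4 * δ) / (1 - γ) := by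
    have : 2 * εH / (1 - γ) ≤ 2 * (εS + 4 * δ) / (1 - γ) := by
      gcongr
    linarith
  have hsq : (1 - γ) ^ 2 ≤ 1 - γ := by nlinarith [mul_nonneg hγ0 hγpos.le]
  have hfinal : 2 * (εS + 4 * δ) / (1 - γ) ≤ 2 * (εS + 4 * δ) / (1 - γ) ^ 2 :=
    div_le_div_of_nonneg_left (by linarith) (by positivity) hsq
  linarith
end

section
/- Let S and A be finite nonempty sets, Q : S → A → ℝ, and D(s,s') = max_{a ∈ A} |Q(s,a) − Q(s',a)|. Let c : Fin k → S → Bool be concept predictors, and for each i ∈ Fin k let m_i be a natural number with 1 ≤ m_i ≤ |S| (corresponding to an adversarial flip budget |T_i| = (1−δ_i)|S| with accuracy δ_i < 1). Then there exist perturbed predictors f : Fin k → S → Bool such that for each i, |{s : f i s ≠ c i s}| ≤ m_i, and the abstraction error of f equals the maximum possible Q-distance: max over pairs (s,s') with (∀ i, f i s = f i s') of D(s,s') = max over all pairs (s,s') ∈ S × S of D(s,s'). -/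
/-- The abstraction error of a family of predictors `f : Fin k → S → Bool`:
the maximum Q-distance over pairs of states on which all predictors agree. -/
noncomputable def predAbstractionError {S A : Type*} [Fintype S] [Nonempty S]
    [Fintype A] [Nonempty A] {k : ℕ} (Q : S → A → ℝ) (f : Fin k → S → Bool) : ℝ :=
  (Finset.univ.filter (fun p : S × S => ∀ i, f i p.1 = f i p.2)).sup'
    (by
      obtain ⟨s⟩ := (inferInstance : Nonempty S)
      exact ⟨(s, s), by simp⟩)
    (fun p => Qdist Q p.1 p.2)

/-- Under adversarial noise, even with per-concept flip budgets `m i ≥ 1`, there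
is a perturbation of the concept predictors whose abstraction error equals the
maximum possible Q-distance. -/
theorem adversarial_perturbation_worst_case
    {S A : Type*} [Fintype S] [Nonempty S] [Fintype A] [Nonempty A] [DecidableEq S]
    (Q : S → A → ℝ) (k : ℕ) (c : Fin k → S → Bool) (m : Fin k → ℕ)
    (hm : ∀ i, 1 ≤ m i ∧ m i ≤ Fintype.card S) :
    ∃ f : Fin k → S → Bool,
      (∀ i, (Finset.univ.filter (fun s => f i s ≠ c i s)).card ≤ m i) ∧
      predAbstractionError Q f =
        Finset.univ.sup' Finset.univ_nonempty
          (fun p : S × S => Qdist Q p.1 p.2) := by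
  -- pick a maximizing pair
  obtain ⟨p₀, -, hp₀⟩ := Finset.exists_max_image (Finset.univ : Finset (S × S))
    (fun p : S × S => Qdist Q p.1 p.2) ⟨(Classical.arbitrary S, Classical.arbitrary S), by simp⟩
  set s₀ := p₀.1
  set s₁ := p₀.2
  refine ⟨fun i s => if c i s₀ = c i s₁ then c i s else (if s = s₀ then c i s₁ else c i s),
    ?_, ?_⟩
  · intro i
    refine le_trans ?_ (hm i).1
    have : (Finset.univ.filter (fun s =>
        (if c i s₀ = c i s₁ then c i s else (if s = s₀ then c i s₁ else c i s)) ≠ c i s))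
        ⊆ {s₀} := by
      intro s hs
      simp only [Finset.mem_filter, Finset.mem_univ, true_and] at hs
      by_cases h : c i s₀ = c i s₁
      · simp [h] at hs
      · simp only [if_neg h] at hs
        by_cases h2 : s = s₀
        · simp [h2]
        · simp [h2] at hs
    simpa using Finset.card_le_card this
  · unfold predAbstractionError
    apply le_antisymm
    · apply Finset.sup'_le
      intro p hp
      exact Finset.le_sup' (fun q : S × S => Qdist Q q.1 q.2) (Finset.mem_univ p)
    · apply Finset.sup'_le
      intro p hp
      have hmem : p₀ ∈ Finset.univ.filter (fun q : S × S => ∀ i,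
          (if c i s₀ = c i s₁ then c i q.1 else (if q.1 = s₀ then c i s₁ else c i q.1))
          = (if c i s₀ = c i s₁ then c i q.2 else (if q.2 = s₀ then c i s₁ else c i q.2))) := by
        simp only [Finset.mem_filter, Finset.mem_univ, true_and]
        intro i
        by_cases h : c i s₀ = c i s₁
        · simp [h]
          exact h
        · have h1 : s₁ ≠ s₀ := fun he => h (by rw [he])
          simp [h, h1]
          show (if s₀ = s₀ then c i s₁ else c i s₀) = (if s₁ = s₀ then c i s₁ else c i s₁)
          simp [h1]
      calc Qdist Q p.1 p.2 ≤ Qdist Q s₀ s₁ := hp₀ p (Finset.mem_univ p)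
        _ ≤ _ := Finset.le_sup' (fun q : S × S => Qdist Q q.1 q.2) hmem
end

section
/- Let U be a finite nonempty set with n = |U|, w : U → ℝ with w i ≥ 0 for all i, and C ⊆ U a set of distinguished indices. Consider the state space U × Bool with uniform distribution, action space Bool, and reward r((i,b), a) = (if a = b then w i else 0). Consider deterministic policies π : U × Bool → Bool that are constrained to be constant on undistinguished pairs: for every i ∉ C, π(i, false) = π(i, true). Then the maximum over all such constrained policies of the expected reward (1/(2n)) ∑_{(i,b) ∈ U × Bool} r((i,b), π(i,b)) equals (1/(2n)) (∑_{i ∈ U} w i + ∑_{i ∈ C} w i), i.e. (1/2n)·∑_i w i + (1/2n)·∑_{i ∈ C} w i. -/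
/-- In the NP-hardness reduction MDP with state space `U × Bool` (uniform initial
distribution), action space `Bool`, and reward `w i` for matching the hidden bit,
the maximum expected reward over deterministic policies constrained to be
constant on undistinguished pairs (`i ∉ C`) equals
`(1/(2n)) (∑_i w i + ∑_{i ∈ C} w i)`. -/
theorem constrained_policy_value
    {U : Type*} [Fintype U] [Nonempty U] [DecidableEq U]
    (w : U → ℝ) (hw : ∀ i, 0 ≤ w i)
    (C : Finset U) (n : ℕ) (hn : n = Fintype.card U) :
    IsGreatest
      {v : ℝ | ∃ π : U × Bool → Bool,
        (∀ i ∉ C, π (i, false) = π (i, true)) ∧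
        v = (1 / (2 * n)) * ∑ p : U × Bool, (if π p = p.2 then w p.1 else 0)}
      ((1 / (2 * n)) * (∑ i, w i + ∑ i ∈ C, w i)) := by
  have hsplit : ∑ i, w i + ∑ i ∈ C, w i
      = ∑ i, (w i + if i ∈ C then w i else 0) := by
    rw [Finset.sum_add_distrib]
    congr 1
    rw [Finset.sum_ite_mem, Finset.univ_inter]
  constructor
  · refine ⟨fun p => if p.1 ∈ C then p.2 else true, ?_, ?_⟩
    · intro i hi; simp [hi]
    · congr 1
      rw [hsplit, Fintype.sum_prod_type]
      refine Finset.sum_congr rfl fun i _ => ?_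
      by_cases h : i ∈ C <;> simp [h, Fintype.sum_bool] <;> ring
  · rintro v ⟨π, hπ, rfl⟩
    have h0 : (0:ℝ) ≤ 1 / (2 * n) := by positivity
    refine mul_le_mul_of_nonneg_left ?_ h0
    rw [hsplit, Fintype.sum_prod_type]
    refine Finset.sum_le_sum fun i _ => ?_
    rw [Fintype.sum_bool]
    by_cases h : i ∈ C
    · simp only [h, if_true]
      have h1 : (if π (i, true) = true then w i else 0) ≤ w i := by
        split <;> simp [hw i]
      have h2 : (if π (i, false) = false then w i else 0) ≤ w i := by
        split <;> simp [hw i]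
      linarith
    · have he := hπ i h
      simp only [h, if_false, add_zero]
      cases hb : π (i, true) <;> rw [he, hb] <;> simp
end
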